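/- Let $X$ be a Banach lattice and suppose there is a constant $c$ with $0 < c < 2$ such that $c\,\|x + y\| \ge \|x\| + \|y\|$ for all disjoint $x, y \in X$. Then $X$ satisfies a lower $p$-estimate for some $1 \le p < \infty$: there exist $p \in [1, \infty)$ and a constant $K < \infty$ such that for every finite pairwise disjoint family $(x_i)_{1 \le i \le n}$ in $X$, $\big(\sum_{i=1}^{n} \|x_i\|^p\big)^{1/p} \le K \big\|\sum_{i=1}^{n} x_i\big\|$. -/

import Mathlib

/-!
Splitting a disjoint family into two halves and iterating the two-element estimate gives
`∑ ‖xᵢ‖ ≤ c ^ k * ‖∑ xᵢ‖` for families of at most `2 ^ k` elements, that is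
`∑ ‖xᵢ‖ ≲ m ^ θ * ‖∑ xᵢ‖` for `m` elements, where `θ = log₂ c < 1`. Partial sums of a disjoint
family have smaller norm than the whole sum, so the `m`-th largest of the `‖xᵢ‖` is
`≲ m ^ (θ - 1) * ‖∑ xᵢ‖`, and these bounds are `p`-summable once `p * (1 - θ) > 1`.
-/

open Finset

section LatticeOrderedGroup

variable {α ι : Type*} [AddCommGroup α] [Lattice α] [IsOrderedAddMonoid α]

lemma add_inf_le_inf_add_inf {a b c : α} (ha : 0 ≤ a) (hb : 0 ≤ b) (hc : 0 ≤ c) :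
    (a + b) ⊓ c ≤ a ⊓ c + b ⊓ c :=
  calc (a + b) ⊓ c ≤ (a ⊓ c + b) ⊓ (a ⊓ c + c) := by
        refine le_inf ?_ (inf_le_right.trans (le_add_of_nonneg_left (le_inf ha hc)))
        calc (a + b) ⊓ c ≤ (a + b) ⊓ (c + b) := inf_le_inf_left _ (le_add_of_nonneg_right hb)
          _ = a ⊓ c + b := (inf_add ..).symm
    _ = a ⊓ c + b ⊓ c := (add_inf ..).symm

lemma Finset.sum_inf_eq_zero {s : Finset ι} {f : ι → α} {c : α} (hf : ∀ i ∈ s, 0 ≤ f i)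
    (hc : 0 ≤ c) (h : ∀ i ∈ s, f i ⊓ c = 0) : (∑ i ∈ s, f i) ⊓ c = 0 := by
  classical
  induction s using Finset.induction_on with
  | empty => simpa using hc
  | insert a s ha ih =>
    simp only [mem_insert, forall_eq_or_imp] at hf h
    rw [sum_insert ha]
    have hs : 0 ≤ ∑ i ∈ s, f i := sum_nonneg hf.2
    refine le_antisymm ?_ (le_inf (add_nonneg hf.1 hs) hc)
    simpa [h.1, ih hf.2 h.2] using add_inf_le_inf_add_inf hf.1 hs hc

lemma abs_le_abs_add_of_inf_abs_eq_zero {x y : α} (h : |x| ⊓ |y| = 0) : |x| ≤ |x + y| :=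
  calc |x| = (|x + y| + |y|) ⊓ |x| := by
        refine (inf_of_le_right ?_).symm
        simpa using abs_add_le (x + y) (-y)
    _ ≤ |x + y| ⊓ |x| + |y| ⊓ |x| :=
        add_inf_le_inf_add_inf (abs_nonneg _) (abs_nonneg _) (abs_nonneg _)
    _ ≤ |x + y| := by rw [inf_comm |y|, h, add_zero]; exact inf_le_left

lemma abs_add_eq_add_abs_of_inf_abs_eq_zero {x y : α} (h : |x| ⊓ |y| = 0) :
    |x + y| = |x| + |y| := by
  refine le_antisymm (abs_add_le x y) ?_
  rw [← inf_add_sup, h, zero_add]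
  refine sup_le (abs_le_abs_add_of_inf_abs_eq_zero h) ?_
  rw [add_comm]
  exact abs_le_abs_add_of_inf_abs_eq_zero (by rwa [inf_comm])

lemma Finset.abs_sum_eq_sum_abs_of_pairwise {s : Finset ι} {x : ι → α}
    (h : (s : Set ι).Pairwise fun i j => |x i| ⊓ |x j| = 0) :
    |∑ i ∈ s, x i| = ∑ i ∈ s, |x i| := by
  classical
  induction s using Finset.induction_on with
  | empty => simp
  | insert a s ha ih =>
    rw [coe_insert, Set.pairwise_insert] at h
    have hdisj : |x a| ⊓ |∑ i ∈ s, x i| = 0 := by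
      rw [ih h.1, inf_comm]
      exact sum_inf_eq_zero (fun _ _ => abs_nonneg _) (abs_nonneg _)
        fun i hi => (h.2 i hi (ne_of_mem_of_not_mem hi ha).symm).2
    rw [sum_insert ha, sum_insert ha, abs_add_eq_add_abs_of_inf_abs_eq_zero hdisj, ih h.1]

lemma Finset.abs_sum_inf_abs_sum_sdiff_eq_zero [DecidableEq ι] {s t : Finset ι} {x : ι → α}
    (hts : t ⊆ s) (h : (s : Set ι).Pairwise fun i j => |x i| ⊓ |x j| = 0) :
    |∑ i ∈ t, x i| ⊓ |∑ i ∈ s \ t, x i| = 0 := by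
  rw [abs_sum_eq_sum_abs_of_pairwise (h.mono (by simpa using hts)),
    abs_sum_eq_sum_abs_of_pairwise (h.mono (by simp))]
  refine sum_inf_eq_zero (fun _ _ => abs_nonneg _) (sum_nonneg fun _ _ => abs_nonneg _)
    fun i hi => ?_
  rw [inf_comm]
  refine sum_inf_eq_zero (fun _ _ => abs_nonneg _) (abs_nonneg _) fun j hj => ?_
  rw [mem_sdiff] at hj
  exact h hj.1 (hts hi) (ne_of_mem_of_not_mem hi hj.2).symm

end LatticeOrderedGroup

lemma pow_log_succ_le_max_mul_rpow_logb {c : ℝ} (hc : 0 < c) {m : ℕ} (hm : m ≠ 0) :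
    c ^ (Nat.log 2 m + 1) ≤ max c 1 * (m : ℝ) ^ Real.logb 2 c := by
  set θ := Real.logb 2 c
  set k := Nat.log 2 m + 1
  have hm0 : (0 : ℝ) < m := by positivity
  have hmk : (m : ℝ) ≤ 2 ^ k := by exact_mod_cast (Nat.lt_pow_succ_log_self one_lt_two m).le
  have hkm : (2 : ℝ) ^ k ≤ 2 * m := by
    rw [pow_succ, mul_comm]
    gcongr
    exact_mod_cast Nat.pow_log_le_self 2 hm
  have hck : c ^ k = ((2 : ℝ) ^ k) ^ θ := by
    rw [← Real.rpow_natCast, ← Real.rpow_natCast, ← Real.rpow_mul zero_le_two,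
      mul_comm, Real.rpow_mul zero_le_two, Real.rpow_logb two_pos (by norm_num) hc]
  rw [hck]
  rcases le_total 0 θ with hθ | hθ
  · calc ((2 : ℝ) ^ k) ^ θ ≤ (2 * m) ^ θ := by gcongr
      _ = c * (m : ℝ) ^ θ := by
        rw [Real.mul_rpow zero_le_two hm0.le, Real.rpow_logb two_pos (by norm_num) hc]
      _ ≤ max c 1 * (m : ℝ) ^ θ := by gcongr; exact le_max_left _ _
  · calc ((2 : ℝ) ^ k) ^ θ ≤ (m : ℝ) ^ θ := Real.rpow_le_rpow_of_nonpos hm0 hmk hθ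
      _ ≤ max c 1 * (m : ℝ) ^ θ := le_mul_of_one_le_left (by positivity) (le_max_right _ _)

section Normed

variable {X ι : Type*} [NormedAddCommGroup X] [Lattice X] [IsOrderedAddMonoid X]

lemma Finset.norm_sum_le_norm_sum_of_subset [HasSolidNorm X] {s t : Finset ι} {x : ι → X}
    (hts : t ⊆ s) (h : (s : Set ι).Pairwise fun i j => |x i| ⊓ |x j| = 0) :
    ‖∑ i ∈ t, x i‖ ≤ ‖∑ i ∈ s, x i‖ := by
  refine norm_le_norm_of_abs_le_abs ?_
  rw [abs_sum_eq_sum_abs_of_pairwise h, abs_sum_eq_sum_abs_of_pairwise (h.mono (by simpa))]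
  exact sum_le_sum_of_subset_of_nonneg hts fun _ _ _ => abs_nonneg _

lemma Finset.sum_norm_le_pow_mul_norm_sum {c : ℝ} (hc : 0 ≤ c)
    (hest : ∀ x y : X, |x| ⊓ |y| = 0 → ‖x‖ + ‖y‖ ≤ c * ‖x + y‖) (k : ℕ) {s : Finset ι}
    (hs : #s ≤ 2 ^ k) {x : ι → X} (h : (s : Set ι).Pairwise fun i j => |x i| ⊓ |x j| = 0) :
    ∑ i ∈ s, ‖x i‖ ≤ c ^ k * ‖∑ i ∈ s, x i‖ := by
  classical
  induction k generalizing s with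
  | zero =>
    obtain hs | hs := Nat.le_one_iff_eq_zero_or_eq_one.1 hs
    · simp [card_eq_zero.1 hs]
    · obtain ⟨a, rfl⟩ := card_eq_one.1 hs
      simp
  | succ k ih =>
    obtain ⟨t, hts, ht⟩ := exists_subset_card_eq (Nat.div_le_self #s 2)
    have hst : #(s \ t) ≤ 2 ^ k := by rw [card_sdiff_of_subset hts, pow_succ] at *; omega
    calc ∑ i ∈ s, ‖x i‖ = ∑ i ∈ t, ‖x i‖ + ∑ i ∈ s \ t, ‖x i‖ := by rw [add_comm, sum_sdiff hts]
      _ ≤ c ^ k * (‖∑ i ∈ t, x i‖ + ‖∑ i ∈ s \ t, x i‖) := by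
        rw [mul_add]
        gcongr
        · exact ih (by rw [ht, pow_succ] at *; omega) (h.mono (by simpa))
        · exact ih hst (h.mono (by simp))
      _ ≤ c ^ k * (c * ‖∑ i ∈ t, x i + ∑ i ∈ s \ t, x i‖) := by
        gcongr
        exact hest _ _ (abs_sum_inf_abs_sum_sdiff_eq_zero hts h)
      _ = c ^ (k + 1) * ‖∑ i ∈ s, x i‖ := by rw [add_comm, sum_sdiff hts, pow_succ, mul_assoc]

lemma Finset.sum_norm_le_max_mul_card_rpow_mul_norm_sum {c : ℝ} (hc : 0 < c)
    (hest : ∀ x y : X, |x| ⊓ |y| = 0 → ‖x‖ + ‖y‖ ≤ c * ‖x + y‖) {s : Finset ι} {x : ι → X}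
    (h : (s : Set ι).Pairwise fun i j => |x i| ⊓ |x j| = 0) :
    ∑ i ∈ s, ‖x i‖ ≤ max c 1 * (#s : ℝ) ^ Real.logb 2 c * ‖∑ i ∈ s, x i‖ := by
  rcases s.eq_empty_or_nonempty with rfl | hs
  · simp
  calc ∑ i ∈ s, ‖x i‖ ≤ c ^ (Nat.log 2 #s + 1) * ‖∑ i ∈ s, x i‖ :=
        sum_norm_le_pow_mul_norm_sum hc.le hest _ (Nat.lt_pow_succ_log_self one_lt_two _).le h
    _ ≤ max c 1 * (#s : ℝ) ^ Real.logb 2 c * ‖∑ i ∈ s, x i‖ := by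
        gcongr
        exact pow_log_succ_le_max_mul_rpow_logb hc hs.card_pos.ne'

lemma norm_le_mul_rpow_of_antitone [HasSolidNorm X] {c : ℝ} (hc : 0 < c)
    (hest : ∀ x y : X, |x| ⊓ |y| = 0 → ‖x‖ + ‖y‖ ≤ c * ‖x + y‖) {n : ℕ} {x : Fin n → X}
    (hx : Pairwise fun i j => |x i| ⊓ |x j| = 0) (hanti : Antitone fun i => ‖x i‖) (i : Fin n) :
    ‖x i‖ ≤ max c 1 * ‖∑ j, x j‖ * ((i : ℝ) + 1) ^ (Real.logb 2 c - 1) := by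
  have hi : (0 : ℝ) < (i : ℝ) + 1 := by positivity
  have hcard : (#(Iic i) : ℝ) = (i : ℝ) + 1 := by rw [Fin.card_Iic]; push_cast; rfl
  rw [Real.rpow_sub_one hi.ne', mul_div_assoc', le_div_iff₀ hi]
  calc ‖x i‖ * ((i : ℝ) + 1) = ∑ _j ∈ Iic i, ‖x i‖ := by
        rw [sum_const, nsmul_eq_mul, hcard, mul_comm]
    _ ≤ ∑ j ∈ Iic i, ‖x j‖ := sum_le_sum fun j hj => hanti (mem_Iic.1 hj)
    _ ≤ max c 1 * ((i : ℝ) + 1) ^ Real.logb 2 c * ‖∑ j ∈ Iic i, x j‖ := by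
        rw [← hcard]; exact sum_norm_le_max_mul_card_rpow_mul_norm_sum hc hest (hx.set_pairwise _)
    _ ≤ max c 1 * ((i : ℝ) + 1) ^ Real.logb 2 c * ‖∑ j, x j‖ := by
        gcongr
        exact norm_sum_le_norm_sum_of_subset (subset_univ _) (hx.set_pairwise _)
    _ = max c 1 * ‖∑ j, x j‖ * ((i : ℝ) + 1) ^ Real.logb 2 c := by ring

end Normed

lemma Fin.exists_perm_antitone {α : Type*} [LinearOrder α] {n : ℕ} (f : Fin n → α) :
    ∃ σ : Equiv.Perm (Fin n), Antitone (f ∘ σ) :=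
  ⟨Tuple.sort (OrderDual.toDual ∘ f), monotone_toDual_comp_iff.1 (Tuple.monotone_sort _)⟩

lemma rpow_sum_rpow_le_of_le_mul_rpow {n : ℕ} {a : Fin n → ℝ} {B p r : ℝ} (ha : ∀ i, 0 ≤ a i)
    (hB : 0 ≤ B) (hp : 0 < p) (hpr : 1 < p * r) (h : ∀ i, a i ≤ B * ((i : ℝ) + 1) ^ (-r)) :
    (∑ i, a i ^ p) ^ (1 / p) ≤ B * (∑' k : ℕ, ((k : ℝ) + 1) ^ (-(p * r))) ^ (1 / p) := by
  set T := ∑' k : ℕ, ((k : ℝ) + 1) ^ (-(p * r))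
  have hsum : Summable fun k : ℕ => ((k : ℝ) + 1) ^ (-(p * r)) := by
    exact_mod_cast (summable_nat_add_iff 1).2 (Real.summable_nat_rpow.2 (by linarith))
  have hterm (i : Fin n) : a i ^ p ≤ B ^ p * ((i : ℝ) + 1) ^ (-(p * r)) := by
    calc a i ^ p ≤ (B * ((i : ℝ) + 1) ^ (-r)) ^ p := by gcongr; exacts [ha i, h i]
      _ = B ^ p * ((i : ℝ) + 1) ^ (-(p * r)) := by
        rw [Real.mul_rpow hB (by positivity), ← Real.rpow_mul (by positivity), neg_mul,
          mul_comm r]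
  have htotal : ∑ i, a i ^ p ≤ B ^ p * T := by
    calc ∑ i, a i ^ p ≤ B ^ p * ∑ i : Fin n, ((i : ℝ) + 1) ^ (-(p * r)) := by
          rw [mul_sum]; exact sum_le_sum fun i _ => hterm i
      _ ≤ B ^ p * T := by
          gcongr
          rw [Fin.sum_univ_eq_sum_range (fun k => ((k : ℝ) + 1) ^ (-(p * r)))]
          exact hsum.sum_le_tsum _ fun _ _ => by positivity
  calc (∑ i, a i ^ p) ^ (1 / p) ≤ (B ^ p * T) ^ (1 / p) := by
        gcongr
        exact sum_nonneg fun i _ => Real.rpow_nonneg (ha i) _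
    _ = B * T ^ (1 / p) := by
        rw [Real.mul_rpow (by positivity) (tsum_nonneg fun _ => by positivity), one_div,
          Real.rpow_rpow_inv hB hp.ne']

theorem lower_p_estimate_of_two_disjoint_estimate_general {X : Type*}
    [NormedAddCommGroup X] [Lattice X] [HasSolidNorm X] [IsOrderedAddMonoid X]
    (c : ℝ) (hc0 : 0 < c) (hc2 : c < 2)
    (hest : ∀ x y : X, |x| ⊓ |y| = 0 → ‖x‖ + ‖y‖ ≤ c * ‖x + y‖) :
    ∃ p : ℝ, 1 ≤ p ∧ ∃ K : ℝ, ∀ (n : ℕ) (x : Fin n → X),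
      (Pairwise fun i j => |x i| ⊓ |x j| = 0) →
      (∑ i, ‖x i‖ ^ p) ^ (1 / p) ≤ K * ‖∑ i, x i‖ := by
  set θ := Real.logb 2 c
  have hθ : 0 < 1 - θ :=
    sub_pos.2 (by simpa using Real.logb_lt_logb (b := 2) one_lt_two hc0 hc2)
  set p := max 1 (2 / (1 - θ))
  have hpr : 1 < p * (1 - θ) := by
    calc (1 : ℝ) < 2 / (1 - θ) * (1 - θ) := by rw [div_mul_cancel₀ _ hθ.ne']; norm_num
      _ ≤ p * (1 - θ) := by gcongr; exact le_max_right _ _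
  refine ⟨p, le_max_left _ _, max c 1 * (∑' k : ℕ, ((k : ℝ) + 1) ^ (-(p * (1 - θ)))) ^ (1 / p),
    fun n x hx => ?_⟩
  obtain ⟨σ, hσ⟩ := Fin.exists_perm_antitone fun i => ‖x i‖
  rw [← Equiv.sum_comp σ, ← Equiv.sum_comp σ x, mul_right_comm]
  refine rpow_sum_rpow_le_of_le_mul_rpow (fun _ => norm_nonneg _) (by positivity)
    (by positivity) hpr fun i => ?_
  rw [neg_sub]
  exact norm_le_mul_rpow_of_antitone hc0 hest (hx.comp_of_injective σ.injective) hσ i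

/-- Let `X` be a Banach lattice and `0 < c < 2` a constant such that
`‖x‖ + ‖y‖ ≤ c‖x + y‖` for all disjoint `x, y`. Then `X` satisfies a lower
`p`-estimate for some `1 ≤ p < ∞`: there are `p ∈ [1, ∞)` and `K` such that
`(∑ ‖xᵢ‖^p)^(1/p) ≤ K ‖∑ xᵢ‖` for every finite pairwise disjoint family. -/
theorem lower_p_estimate_of_two_disjoint_estimate {X : Type*}
    [NormedAddCommGroup X] [Lattice X] [HasSolidNorm X] [IsOrderedAddMonoid X]
    [CompleteSpace X] (c : ℝ) (hc0 : 0 < c) (hc2 : c < 2)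
    (hest : ∀ x y : X, |x| ⊓ |y| = 0 → ‖x‖ + ‖y‖ ≤ c * ‖x + y‖) :
    ∃ p : ℝ, 1 ≤ p ∧ ∃ K : ℝ, ∀ (n : ℕ) (x : Fin n → X),
      (Pairwise fun i j => |x i| ⊓ |x j| = 0) →
      (∑ i, ‖x i‖ ^ p) ^ (1 / p) ≤ K * ‖∑ i, x i‖ :=
  lower_p_estimate_of_two_disjoint_estimate_general c hc0 hc2 hest
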